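/- arXiv:1603.09502 — 10 statements merged into one kernel-verified Lean document; each statement's English description precedes it below -/
import Mathlib

section
/- For every finite argumentation framework F = (A,R), a set S ⊆ A is conflict-free in F if and only if S is conflict-free in the naive kernel F^k(na), where F^k(na) = (A, R ∪ {(a,b) | a ≠ b, {(a,a),(b,a),(b,b)} ∩ R ≠ ∅}). -/
structure AF where
  args : Finset ℕ
  att : Finset (ℕ × ℕ)
  att_sub : att ⊆ args ×ˢ args

namespace AF

/-- S is conflict-free in F. -/
def cf (F : AF) (S : Set ℕ) : Prop :=
  S ⊆ ↑F.args ∧ ∀ a ∈ S, ∀ b ∈ S, (a, b) ∉ F.att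

/-- the range S⁺ of S in F -/
def rng (F : AF) (S : Set ℕ) : Set ℕ :=
  S ∪ {a | ∃ s ∈ S, (s, a) ∈ F.att}

/-- the anti-range S⁻ of S in F -/
def arng (F : AF) (S : Set ℕ) : Set ℕ :=
  S ∪ {a | ∃ s ∈ S, (a, s) ∈ F.att}

/-- a is defended by S in F -/
def defends (F : AF) (S : Set ℕ) (a : ℕ) : Prop :=
  ∀ b, (b, a) ∈ F.att → ∃ s ∈ S, (s, b) ∈ F.att

def setDefends (F : AF) (S T : Set ℕ) : Prop := ∀ a ∈ T, F.defends S a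

def admissible (F : AF) (S : Set ℕ) : Prop := F.cf S ∧ ∀ a ∈ S, F.defends S a

def complete (F : AF) (S : Set ℕ) : Prop :=
  F.admissible S ∧ ∀ a ∈ (F.args : Set ℕ), F.defends S a → a ∈ S

def grounded (F : AF) (S : Set ℕ) : Prop :=
  F.complete S ∧ ∀ T, F.complete T → S ⊆ T

def naive (F : AF) (S : Set ℕ) : Prop :=
  F.cf S ∧ ∀ T, F.cf T → S ⊆ T → S = T

def stable (F : AF) (S : Set ℕ) : Prop := F.cf S ∧ F.rng S = ↑F.args

def stage (F : AF) (S : Set ℕ) : Prop :=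
  F.cf S ∧ ∀ T, F.cf T → F.rng S ⊆ F.rng T → F.rng S = F.rng T

/-- strongly admissible sets (recursive definition) -/
inductive sad (F : AF) : Set ℕ → Prop where
  | intro (S : Set ℕ) (hsub : S ⊆ ↑F.args) (w : ℕ → Set ℕ)
      (hw1 : ∀ a ∈ S, w a ⊆ S \ {a})
      (hw2 : ∀ a ∈ S, sad F (w a))
      (hw3 : ∀ a ∈ S, F.defends (w a) a) : sad F S

/-- self-attacking arguments -/
def loops (F : AF) : Set ℕ := {a | (a, a) ∈ F.att}

/-- naive kernel -/
def naiveKernel (F : AF) : AF :=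
  ⟨F.args,
   F.att ∪ (F.args ×ˢ F.args).filter
     (fun p => p.1 ≠ p.2 ∧ ((p.1, p.1) ∈ F.att ∨ (p.2, p.1) ∈ F.att ∨ (p.2, p.2) ∈ F.att)),
   Finset.union_subset F.att_sub (Finset.filter_subset _ _)⟩

/-- stable kernel -/
def stbKernel (F : AF) : AF :=
  ⟨F.args, F.att.filter (fun p => ¬ (p.1 ≠ p.2 ∧ (p.1, p.1) ∈ F.att)),
   (Finset.filter_subset _ _).trans F.att_sub⟩

/-- grounded kernel -/
def grKernel (F : AF) : AF :=
  ⟨F.args,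
   F.att.filter (fun p => ¬ (p.1 ≠ p.2 ∧ (p.2, p.2) ∈ F.att ∧ ((p.1, p.1) ∈ F.att ∨ (p.2, p.1) ∈ F.att))),
   (Finset.filter_subset _ _).trans F.att_sub⟩

/-- F^l : remove attacks between distinct self-attacking arguments -/
def loopKernel (F : AF) : AF :=
  ⟨F.args,
   F.att.filter (fun p => ¬ (p.1 ≠ p.2 ∧ (p.1, p.1) ∈ F.att ∧ (p.2, p.2) ∈ F.att)),
   (Finset.filter_subset _ _).trans F.att_sub⟩

/-- union of AFs -/
def union (F G : AF) : AF :=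
  ⟨F.args ∪ G.args, F.att ∪ G.att,
   Finset.union_subset
     (F.att_sub.trans (Finset.product_subset_product Finset.subset_union_left Finset.subset_union_left))
     (G.att_sub.trans (Finset.product_subset_product Finset.subset_union_right Finset.subset_union_right))⟩

end AF


theorem stmt0 (F : AF) (S : Set ℕ) : F.cf S ↔ F.naiveKernel.cf S := by
  constructor
  · rintro ⟨hsub, hcf⟩
    refine ⟨hsub, fun a ha b hb h => ?_⟩
    simp only [AF.naiveKernel, Finset.mem_union, Finset.mem_filter] at h
    rcases h with h | ⟨_, _, h⟩
    · exact hcf a ha b hb h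
    · rcases h with h | h | h
      · exact hcf a ha a ha h
      · exact hcf b hb a ha h
      · exact hcf b hb b hb h
  · rintro ⟨hsub, hcf⟩
    refine ⟨hsub, fun a ha b hb h => ?_⟩
    exact hcf a ha b hb (by simp [AF.naiveKernel, Finset.mem_union, h])
end

section
/- If two finite argumentation frameworks F and G have the same naive kernel (F^k(na) = G^k(na)), then F and G have the same set of arguments and the same naive extensions (⊆-maximal conflict-free sets). -/
lemma cf_naiveKernel (F : AF) (S : Set ℕ) : F.naiveKernel.cf S ↔ F.cf S := by
  constructor
  · rintro ⟨h1, h2⟩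
    exact ⟨h1, fun a ha b hb hab => h2 a ha b hb (Finset.mem_union_left _ hab)⟩
  · rintro ⟨h1, h2⟩
    refine ⟨h1, fun a ha b hb hab => ?_⟩
    rcases Finset.mem_union.1 hab with hmem | hmem
    · exact h2 a ha b hb hmem
    · rcases Finset.mem_filter.1 hmem with ⟨_, _, hc⟩
      rcases hc with hc | hc | hc
      · exact h2 a ha a ha hc
      · exact h2 b hb a ha hc
      · exact h2 b hb b hb hc

lemma naive_naiveKernel (F : AF) (S : Set ℕ) : F.naiveKernel.naive S ↔ F.naive S := by
  unfold AF.naive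
  simp only [cf_naiveKernel]

theorem stmt2 (F G : AF) (h : F.naiveKernel = G.naiveKernel) :
    F.args = G.args ∧ {S | F.naive S} = {S | G.naive S} := by
  constructor
  · have := congrArg AF.args h
    simpa [AF.naiveKernel] using this
  · ext S
    rw [Set.mem_setOf_eq, Set.mem_setOf_eq, ← naive_naiveKernel F, ← naive_naiveKernel G, h]
end

section
/- If two finite argumentation frameworks F and G have different naive kernels but the same set of arguments, then their naive extensions differ, i.e., na(F) ≠ na(G). -/
/-! The naive kernel attacks `(a, b)` exactly when `{a, b}` is not conflict-free, and by
finiteness the conflict-free sets are exactly the subsets of naive extensions. Hence the naive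
extensions, together with the arguments, determine the naive kernel. -/


namespace AF

theorem ext {F G : AF} (hargs : F.args = G.args) (hatt : F.att = G.att) : F = G := by
  cases F; cases G; simp_all

variable (F : AF)

theorem mem_args_of_mem_att {a b : ℕ} (h : (a, b) ∈ F.att) : a ∈ F.args ∧ b ∈ F.args :=
  Finset.mem_product.mp (F.att_sub h)

theorem cf_pair_iff (a b : ℕ) :
    F.cf {a, b} ↔ a ∈ F.args ∧ b ∈ F.args ∧
      (a, a) ∉ F.att ∧ (a, b) ∉ F.att ∧ (b, a) ∉ F.att ∧ (b, b) ∉ F.att := by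
  simp [cf, Set.insert_subset_iff, and_assoc]

theorem exists_naive_superset {S : Set ℕ} (hS : F.cf S) : ∃ T, F.naive T ∧ S ⊆ T := by
  have hfin : {T | F.cf T ∧ S ⊆ T}.Finite :=
    (F.args : Set ℕ).toFinite.finite_subsets.subset fun T hT => hT.1.1
  obtain ⟨T, ⟨hT, hST⟩, hmax⟩ := hfin.exists_maximalFor id _ ⟨S, hS, subset_rfl⟩
  exact ⟨T, ⟨hT, fun U hU hTU => hTU.antisymm (hmax ⟨hU, hST.trans hTU⟩ hTU)⟩, hST⟩

theorem cf.mono {F : AF} {S T : Set ℕ} (hT : F.cf T) (hST : S ⊆ T) : F.cf S :=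
  ⟨hST.trans hT.1, fun a ha b hb => hT.2 a (hST ha) b (hST hb)⟩

theorem cf_iff_exists_naive_superset (S : Set ℕ) : F.cf S ↔ ∃ T, F.naive T ∧ S ⊆ T :=
  ⟨F.exists_naive_superset, fun ⟨_, hT, hST⟩ => hT.1.mono hST⟩

theorem mem_naiveKernel_att_iff (a b : ℕ) :
    (a, b) ∈ F.naiveKernel.att ↔ a ∈ F.args ∧ b ∈ F.args ∧ ¬F.cf {a, b} := by
  simp only [naiveKernel, cf_pair_iff, Finset.mem_union, Finset.mem_filter, Finset.mem_product]
  grind [mem_args_of_mem_att]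

end AF

theorem stmt3 (F G : AF) (h : F.naiveKernel ≠ G.naiveKernel) (ha : F.args = G.args) :
    {S | F.naive S} ≠ {S | G.naive S} := by
  intro hna
  have hnaive (S : Set ℕ) : F.naive S ↔ G.naive S := Set.ext_iff.mp hna S
  have hcf (S : Set ℕ) : F.cf S ↔ G.cf S := by
    simp only [AF.cf_iff_exists_naive_superset, hnaive]
  refine h (AF.ext ha ?_)
  ext ⟨a, b⟩
  simp only [AF.mem_naiveKernel_att_iff, ha, hcf]
end

section
/- In any finite argumentation framework F, every strongly admissible set is a subset of the grounded extension. -/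
theorem stmt5 (F : AF) (S T : Set ℕ) (hS : F.sad S) (hT : F.grounded T) : S ⊆ T := by
  induction hS with
  | intro S hsub w hw1 hw2 hw3 ih =>
    intro a ha
    apply hT.1.2 a (hsub ha)
    intro b hb
    obtain ⟨s, hs, hsb⟩ := hw3 a ha b hb
    exact ⟨s, ih a ha hs, hsb⟩
end

section
/- For finite argumentation frameworks, the recursive definition of strong admissibility (every a ∈ S is defended by a strongly admissible subset of S \ {a}) is equivalent to the constructive definition: S is strongly admissible iff there exist finitely many pairwise disjoint sets A_1,…,A_n with S = ∪ A_i, A_1 ⊆ Γ_F(∅), and for each 1 ≤ j ≤ n−1, the union A_1 ∪ … ∪ A_j defends A_{j+1}. -/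
/-- strongly admissible sets (constructive definition) -/
def AF.sadc (F : AF) (S : Set ℕ) : Prop :=
  S ⊆ ↑F.args ∧
  ∃ n : ℕ, ∃ A : Fin n → Set ℕ,
    (∀ i j : Fin n, i ≠ j → Disjoint (A i) (A j)) ∧
    S = ⋃ i, A i ∧
    (∀ i : Fin n, (i : ℕ) = 0 → A i ⊆ {a | a ∈ F.args ∧ ∀ b, (b, a) ∉ F.att}) ∧
    (∀ j : Fin n, 0 < (j : ℕ) →
      F.setDefends (⋃ i : Fin n, ⋃ (_ : (i : ℕ) < (j : ℕ)), A i) (A j))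

lemma AF.defends_mono (F : AF) {S T : Set ℕ} (h : S ⊆ T) {a : ℕ} (hd : F.defends S a) :
    F.defends T a := fun b hb => by
  obtain ⟨s, hs, hsb⟩ := hd b hb; exact ⟨s, h hs, hsb⟩

def AF.DD (F : AF) (S : Set ℕ) : ℕ → Set ℕ
  | 0 => {a | a ∈ S ∧ ∀ b, (b, a) ∉ F.att}
  | (k+1) => F.DD S k ∪ {a | a ∈ S ∧ F.defends (F.DD S k) a}

lemma AF.DD_subset (F : AF) (S : Set ℕ) : ∀ k, F.DD S k ⊆ S
  | 0 => fun _ h => h.1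
  | (k+1) => fun a h => by
      rcases h with h | h
      · exact F.DD_subset S k h
      · exact h.1

lemma AF.DD_mono (F : AF) (S : Set ℕ) {k l : ℕ} (h : k ≤ l) : F.DD S k ⊆ F.DD S l := by
  induction l with
  | zero => simp_all
  | succ l ih =>
    rcases Nat.lt_or_ge k (l+1) with h' | h'
    · exact (ih (Nat.lt_succ_iff.mp h')).trans (by intro a ha; exact Or.inl ha)
    · have : k = l + 1 := le_antisymm h h'
      subst this; exact subset_rfl

lemma AF.DD_monoS (F : AF) {S T : Set ℕ} (h : S ⊆ T) : ∀ k, F.DD S k ⊆ F.DD T k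
  | 0 => fun a ha => ⟨h ha.1, ha.2⟩
  | (k+1) => fun a ha => by
      rcases ha with ha | ha
      · exact Or.inl (F.DD_monoS h k ha)
      · exact Or.inr ⟨h ha.1, F.defends_mono (F.DD_monoS h k) ha.2⟩

lemma AF.sad_DD (F : AF) {S : Set ℕ} (h : F.sad S) : ∀ a ∈ S, ∃ k, a ∈ F.DD S k := by
  induction h with
  | intro S hsub w hw1 hw2 hw3 ih =>
    intro a ha
    have hwS : w a ⊆ S := fun x hx => ((hw1 a ha) hx).1
    set f : ℕ → ℕ := fun x => sInf {k | x ∈ F.DD (w a) k} with hf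
    have hN : ∀ x ∈ w a, x ∈ F.DD (w a) (F.args.sup f) := by
      intro x hx
      obtain ⟨k, hk⟩ := ih a ha x hx
      have hne : {k | x ∈ F.DD (w a) k}.Nonempty := ⟨k, hk⟩
      have hm : x ∈ F.DD (w a) (f x) := Nat.sInf_mem hne
      exact F.DD_mono (w a) (Finset.le_sup (f := f) (by exact_mod_cast hsub (hwS hx))) hm
    refine ⟨F.args.sup f + 1, Or.inr ⟨ha, ?_⟩⟩
    exact F.defends_mono (fun x hx => F.DD_monoS hwS _ (hN x hx)) (hw3 a ha)

lemma AF.sad_to_sadc (F : AF) (S : Set ℕ) (h : F.sad S) : F.sadc S := by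
  have hsub : S ⊆ ↑F.args := by cases h with | intro S hsub _ _ _ _ => exact hsub
  have key := F.sad_DD h
  set f : ℕ → ℕ := fun x => sInf {k | x ∈ F.DD S k} with hf
  refine ⟨hsub, F.args.sup f + 1, fun i => {a | a ∈ S ∧ f a = (i : ℕ)}, ?_, ?_, ?_, ?_⟩
  · intro i j hij
    rw [Set.disjoint_left]
    rintro a ⟨_, h1⟩ ⟨_, h2⟩
    exact hij (Fin.ext (h1 ▸ h2))
  · ext a
    simp only [Set.mem_iUnion]
    constructor
    · intro ha
      have hfa : f a < F.args.sup f + 1 :=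
        Nat.lt_succ_of_le (Finset.le_sup (f := f) (by exact_mod_cast hsub ha))
      exact ⟨⟨f a, hfa⟩, ha, rfl⟩
    · rintro ⟨i, ha, _⟩; exact ha
  · rintro i hi a ⟨ha, hfa⟩
    have hne : {k | a ∈ F.DD S k}.Nonempty := key a ha
    have hm : a ∈ F.DD S (f a) := Nat.sInf_mem hne
    rw [hfa, hi] at hm
    simp only [AF.DD, Set.mem_setOf_eq] at hm
    exact ⟨hsub ha, hm.2⟩
  · rintro j hj a ⟨ha, hfa⟩
    obtain ⟨m, hmj⟩ : ∃ m, (j : ℕ) = m + 1 := ⟨(j : ℕ) - 1, by omega⟩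
    have hne : {k | a ∈ F.DD S k}.Nonempty := key a ha
    have hmem : a ∈ F.DD S (f a) := Nat.sInf_mem hne
    rw [hfa, hmj] at hmem
    have hlt : m < f a := by omega
    have hnot : m ∉ {k | a ∈ F.DD S k} := Nat.notMem_of_lt_sInf hlt
    simp only [AF.DD, Set.mem_union] at hmem
    rcases hmem with h1 | h2
    · exact absurd h1 hnot
    refine F.defends_mono ?_ h2.2
    intro b hb
    have hbS := F.DD_subset S m hb
    have hfb : f b ≤ m := Nat.sInf_le (show m ∈ {k | b ∈ F.DD S k} from hb)
    have hbn : f b < F.args.sup f + 1 :=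
      Nat.lt_succ_of_le (Finset.le_sup (f := f) (by exact_mod_cast hsub hbS))
    exact Set.mem_iUnion.2 ⟨⟨f b, hbn⟩, Set.mem_iUnion.2 ⟨show f b < (j : ℕ) by omega, ⟨hbS, rfl⟩⟩⟩

lemma AF.sadc_to_sad (F : AF) (S : Set ℕ) (h : F.sadc S) : F.sad S := by
  obtain ⟨hsub, n, A, hdisj, hS, h0, hdef⟩ := h
  set T : ℕ → Set ℕ := fun j => ⋃ i : Fin n, ⋃ (_ : (i : ℕ) < j), A i with hT
  have hTS : ∀ j, T j ⊆ S := by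
    intro j x hx
    simp only [hT, Set.mem_iUnion] at hx
    obtain ⟨i, _, hx⟩ := hx
    rw [hS]; exact Set.mem_iUnion.2 ⟨i, hx⟩
  have hgdef : ∀ a, a ∈ S → ∃ i : Fin n, a ∈ A i := by
    intro a ha; rw [hS] at ha; exact Set.mem_iUnion.mp ha
  classical
  set g : ℕ → ℕ := fun a => if h : ∃ i : Fin n, a ∈ A i then ((Classical.choose h : Fin n) : ℕ) else 0
    with hg
  have hgspec : ∀ (a : ℕ) (i : Fin n), a ∈ A i → g a = (i : ℕ) := by
    intro a i hi
    have hex : ∃ i : Fin n, a ∈ A i := ⟨i, hi⟩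
    have hc := Classical.choose_spec hex
    have : Classical.choose hex = i := by
      by_contra hne
      exact (Set.disjoint_left.mp (hdisj _ _ hne) hc) hi
    simp only [hg, dif_pos hex, this]
  have key : ∀ j, F.sad (T j) := by
    intro j
    induction j using Nat.strong_induction_on with
    | _ j ih =>
      refine AF.sad.intro _ (fun x hx => hsub (hTS j hx)) (fun a => T (g a)) ?_ ?_ ?_
      · intro a ha
        simp only [hT, Set.mem_iUnion] at ha
        obtain ⟨i0, hi0j, hai0⟩ := ha
        show T (g a) ⊆ T j \ {a}
        rw [hgspec a i0 hai0]
        intro x hx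
        simp only [hT, Set.mem_iUnion] at hx
        obtain ⟨k, hki, hxk⟩ := hx
        constructor
        · exact Set.mem_iUnion.2 ⟨k, Set.mem_iUnion.2 ⟨by omega, hxk⟩⟩
        · intro hxa
          rcases hxa with rfl
          have hne : k ≠ i0 := by intro hkk; rw [hkk] at hki; omega
          exact (Set.disjoint_left.mp (hdisj _ _ hne) hxk) hai0
      · intro a ha
        simp only [hT, Set.mem_iUnion] at ha
        obtain ⟨i0, hi0j, hai0⟩ := ha
        show F.sad (T (g a))
        rw [hgspec a i0 hai0]
        exact ih _ hi0j
      · intro a ha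
        simp only [hT, Set.mem_iUnion] at ha
        obtain ⟨i0, hi0j, hai0⟩ := ha
        show F.defends (T (g a)) a
        rw [hgspec a i0 hai0]
        rcases Nat.eq_zero_or_pos (i0 : ℕ) with hz | hpos
        · intro b hb
          exact absurd hb ((h0 i0 hz hai0).2 b)
        · exact hdef i0 hpos a hai0
  have : S = T n := by
    rw [hS]
    ext a
    simp only [hT, Set.mem_iUnion]
    exact ⟨fun ⟨i, hi⟩ => ⟨i, i.isLt, hi⟩, fun ⟨i, _, hi⟩ => ⟨i, hi⟩⟩
  rw [this]; exact key n

theorem stmt6 (F : AF) (S : Set ℕ) : F.sad S ↔ F.sadc S :=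
  ⟨F.sad_to_sadc S, F.sadc_to_sad S⟩
end

section
/- For any finite argumentation framework F and sets B, B' ⊆ A(F): if B defends B' and B is strongly admissible, then B ∪ B' is strongly admissible. -/
theorem stmt7 (F : AF) (B B' : Set ℕ) (hB : B ⊆ ↑F.args) (hB' : B' ⊆ ↑F.args)
    (hdef : F.setDefends B B') (hsad : F.sad B) : F.sad (B ∪ B') := by
  classical
  have hsadB := hsad
  obtain ⟨S, hsub, w, hw1, hw2, hw3⟩ := hsad
  refine AF.sad.intro _ (Set.union_subset hB hB')
    (fun a => if a ∈ B then w a else B) ?_ ?_ ?_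
  · intro a ha
    by_cases h : a ∈ B
    · simp only [if_pos h]
      exact (hw1 a h).trans (Set.diff_subset_diff_left Set.subset_union_left)
    · simp only [if_neg h]
      intro x hx
      exact ⟨Or.inl hx, fun hxa => h (hxa ▸ hx)⟩
  · intro a ha
    by_cases h : a ∈ B
    · simpa only [if_pos h] using hw2 a h
    · simpa only [if_neg h] using hsadB
  · intro a ha
    by_cases h : a ∈ B
    · simpa only [if_pos h] using hw3 a h
    · have ha' : a ∈ B' := ha.resolve_left h
      simpa only [if_neg h] using hdef a ha'
end

section
/- For every finite argumentation framework F, the strongly admissible sets of F coincide with the strongly admissible sets of its grounded kernel: sad(F) = sad(F^k(gr)). -/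
namespace AF

/-- iterated defense levels -/
def D (F : AF) : ℕ → Set ℕ
  | 0 => ∅
  | n+1 => {a | F.defends (F.D n) a}

lemma D_succ_mono (F : AF) : ∀ n, F.D n ⊆ F.D (n+1) := by
  intro n
  induction n with
  | zero => intro a ha; exact absurd ha (by simp [D])
  | succ n ih =>
    intro a ha b hb
    obtain ⟨s, hs, hsb⟩ := ha b hb
    exact ⟨s, ih hs, hsb⟩

lemma D_le_mono (F : AF) {m n : ℕ} (h : m ≤ n) : F.D m ⊆ F.D n := by
  induction h with
  | refl => exact subset_rfl
  | step h ih => exact ih.trans (F.D_succ_mono _)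

lemma D_attackers (F : AF) : ∀ n, ∀ a ∈ F.D n, ∀ b, (b, a) ∈ F.att → ∀ m, b ∉ F.D m := by
  intro n
  induction n with
  | zero => intro a ha; exact absurd ha (by simp [D])
  | succ n ih =>
    intro a ha b hb m hbm
    cases m with
    | zero => exact absurd hbm (by simp [D])
    | succ m =>
      obtain ⟨s, hs, hsb⟩ := ha b hb
      obtain ⟨t, ht, hts⟩ := hbm s hsb
      exact ih s hs t hts m ht

lemma sad_D (F : AF) {S : Set ℕ} (h : F.sad S) : ∀ a ∈ S, ∃ n, a ∈ F.D n := by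
  induction h with
  | intro S hsub w hw1 hw2 hw3 ih =>
    intro a ha
    have hwsub : w a ⊆ ↑F.args := fun x hx => hsub (hw1 a ha hx).1
    have hfin : (w a).Finite := F.args.finite_toSet.subset hwsub
    have hex : ∀ c : ℕ, ∃ n, c ∈ w a → c ∈ F.D n := by
      intro c
      by_cases hc : c ∈ w a
      · obtain ⟨n, hn⟩ := ih a ha c hc
        exact ⟨n, fun _ => hn⟩
      · exact ⟨0, fun h => absurd h hc⟩
    choose g hg using hex
    refine ⟨hfin.toFinset.sup g + 1, ?_⟩
    intro b hb
    obtain ⟨s, hs, hsb⟩ := hw3 a ha b hb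
    refine ⟨s, ?_, hsb⟩
    exact F.D_le_mono (Finset.le_sup (hfin.mem_toFinset.mpr hs)) (hg s hs)

lemma sad_noSelf (F : AF) {S : Set ℕ} (h : F.sad S) {a : ℕ} (ha : a ∈ S) :
    (a, a) ∉ F.att := by
  intro hat
  obtain ⟨n, hn⟩ := F.sad_D h a ha
  exact F.D_attackers n a hn a hat n hn

lemma sad_defend_grK (F : AF) {T : Set ℕ} (h : F.sad T) :
    ∀ b, (∃ s ∈ T, (s, b) ∈ F.att) → ∃ s ∈ T, (s, b) ∈ F.grKernel.att := by
  induction h with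
  | intro T hsub w hw1 hw2 hw3 ih =>
    rintro b ⟨s, hs, hsb⟩
    by_cases hk : (s, b) ∈ F.grKernel.att
    · exact ⟨s, hs, hk⟩
    · have hT : F.sad T := sad.intro T hsub w hw1 hw2 hw3
      have hbad : s ≠ b ∧ (b, b) ∈ F.att ∧ ((s, s) ∈ F.att ∨ (b, s) ∈ F.att) := by
        by_contra hc
        exact hk (Finset.mem_filter.mpr ⟨hsb, by simpa using hc⟩)
      rcases hbad.2.2 with hss | hbs
      · exact absurd hss (F.sad_noSelf hT hs)
      · obtain ⟨t, ht, htb⟩ := hw3 s hs b hbs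
        obtain ⟨t', ht', htk⟩ := ih s hs b ⟨t, ht, htb⟩
        exact ⟨t', ((hw1 s hs) ht').1, htk⟩

lemma sad_to_grK (F : AF) {S : Set ℕ} (h : F.sad S) : F.grKernel.sad S := by
  induction h with
  | intro S hsub w hw1 hw2 hw3 ih =>
    refine sad.intro S hsub w hw1 (fun a ha => ih a ha) ?_
    intro a ha b hb
    have hbF : (b, a) ∈ F.att := (Finset.mem_filter.mp hb).1
    exact F.sad_defend_grK (hw2 a ha) b (hw3 a ha b hbF)

lemma grK_to_sad (F : AF) {S : Set ℕ} (h : F.grKernel.sad S) : F.sad S := by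
  induction h with
  | intro S hsub w hw1 hw2 hw3 ih =>
    have hS : F.grKernel.sad S := sad.intro S hsub w hw1 hw2 hw3
    refine sad.intro S hsub w hw1 (fun a ha => ih a ha) ?_
    intro a ha b hb
    have hbk : (b, a) ∈ F.grKernel.att := by
      by_contra hk
      have hbad : b ≠ a ∧ (a, a) ∈ F.att ∧ ((b, b) ∈ F.att ∨ (a, b) ∈ F.att) := by
        by_contra hc
        exact hk (Finset.mem_filter.mpr ⟨hb, by simpa using hc⟩)
      have haa : (a, a) ∈ F.grKernel.att :=
        Finset.mem_filter.mpr ⟨hbad.2.1, by simp⟩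
      exact (F.grKernel.sad_noSelf hS ha) haa
    obtain ⟨s, hs, hsk⟩ := hw3 a ha b hbk
    exact ⟨s, hs, (Finset.mem_filter.mp hsk).1⟩

end AF


theorem stmt8 (F : AF) : {S | F.sad S} = {S | F.grKernel.sad S} := by
  ext S
  exact ⟨fun h => F.sad_to_grK h, fun h => F.grK_to_sad h⟩
end

section
/- Every rational semantics is verifiable by the verification class induced by r^{+-}(S,S') = (S,S'): if two finite AFs F and G satisfy A(F) = A(G) and {(S, S^+_F, S^-_F) | S ∈ cf(F)} = {(S, S^+_G, S^-_G) | S ∈ cf(G)}, then σ(F) = σ(G) for any rational semantics σ. -/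
lemma AF.ext' {F G : AF} (h1 : F.args = G.args) (h2 : F.att = G.att) : F = G := by
  cases F; cases G; simp_all

lemma step_att (F G : AF) (ha : F.args = G.args)
    (key : ∀ S, F.cf S → G.cf S ∧ F.rng S = G.rng S ∧ F.arng S = G.arng S) :
    ∀ a b : ℕ, a ≠ b → ((a,a) ∉ F.att ∨ (b,b) ∉ F.att) → (a,b) ∈ F.att → (a,b) ∈ G.att := by
  intro a b hne hl hab
  have hmem := F.att_sub hab
  rw [Finset.mem_product] at hmem
  rcases hl with hl | hl
  · -- a not a loop: use rng of {a}
    have hcf : F.cf {a} := by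
      refine ⟨by simpa using hmem.1, ?_⟩
      intro x hx y hy
      simp only [Set.mem_singleton_iff] at hx hy
      subst hx; subst hy; exact hl
    obtain ⟨_, hr, _⟩ := key _ hcf
    have hb : b ∈ F.rng {a} := Or.inr ⟨a, rfl, hab⟩
    rw [hr] at hb
    rcases hb with hb | ⟨s, hs, hsb⟩
    · exact absurd hb.symm hne
    · simp only [Set.mem_singleton_iff] at hs; subst hs; exact hsb
  · -- b not a loop: use arng of {b}
    have hcf : F.cf {b} := by
      refine ⟨by simpa using hmem.2, ?_⟩
      intro x hx y hy
      simp only [Set.mem_singleton_iff] at hx hy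
      subst hx; subst hy; exact hl
    obtain ⟨_, _, hr⟩ := key _ hcf
    have hb : a ∈ F.arng {b} := Or.inr ⟨b, rfl, hab⟩
    rw [hr] at hb
    rcases hb with hb | ⟨s, hs, hsb⟩
    · exact absurd hb hne
    · simp only [Set.mem_singleton_iff] at hs; subst hs; exact hsb


theorem stmt17 (σ : AF → Set (Set ℕ)) (hrat : ∀ F : AF, σ F = σ F.loopKernel)
    (F G : AF) (ha : F.args = G.args)
    (hdata : {p : Set ℕ × Set ℕ × Set ℕ | ∃ S, F.cf S ∧ p = (S, F.rng S, F.arng S)} =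
             {p : Set ℕ × Set ℕ × Set ℕ | ∃ S, G.cf S ∧ p = (S, G.rng S, G.arng S)}) :
    σ F = σ G := by
  have key : ∀ S, F.cf S → G.cf S ∧ F.rng S = G.rng S ∧ F.arng S = G.arng S := by
    intro S hS
    have h1 : (S, F.rng S, F.arng S) ∈
        {p : Set ℕ × Set ℕ × Set ℕ | ∃ S, G.cf S ∧ p = (S, G.rng S, G.arng S)} := by
      rw [← hdata]; exact ⟨S, hS, rfl⟩
    obtain ⟨S', hcf, heq⟩ := h1
    obtain ⟨h1, h2, h3⟩ : S = S' ∧ F.rng S = G.rng S' ∧ F.arng S = G.arng S' := by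
      simpa [Prod.ext_iff] using heq
    subst h1
    exact ⟨hcf, h2, h3⟩
  have key' : ∀ S, G.cf S → F.cf S ∧ G.rng S = F.rng S ∧ G.arng S = F.arng S := by
    intro S hS
    have h1 : (S, G.rng S, G.arng S) ∈
        {p : Set ℕ × Set ℕ × Set ℕ | ∃ S, F.cf S ∧ p = (S, F.rng S, F.arng S)} := by
      rw [hdata]; exact ⟨S, hS, rfl⟩
    obtain ⟨S', hcf, heq⟩ := h1
    obtain ⟨h1, h2, h3⟩ : S = S' ∧ G.rng S = F.rng S' ∧ G.arng S = F.arng S' := by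
      simpa [Prod.ext_iff] using heq
    subst h1
    exact ⟨hcf, h2, h3⟩
  have hloop : ∀ a : ℕ, (a,a) ∈ F.att ↔ (a,a) ∈ G.att := by
    intro a
    constructor
    · intro h
      by_contra hg
      have hmem := F.att_sub h
      rw [Finset.mem_product] at hmem
      have hcf : G.cf {a} := by
        refine ⟨by simpa [← ha] using hmem.1, ?_⟩
        intro x hx y hy
        simp only [Set.mem_singleton_iff] at hx hy
        subst hx; subst hy; exact hg
      exact (key' _ hcf).1.2 a rfl a rfl h
    · intro h
      by_contra hg
      have hmem := G.att_sub h
      rw [Finset.mem_product] at hmem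
      have hcf : F.cf {a} := by
        refine ⟨by simpa [ha] using hmem.1, ?_⟩
        intro x hx y hy
        simp only [Set.mem_singleton_iff] at hx hy
        subst hx; subst hy; exact hg
      exact (key _ hcf).1.2 a rfl a rfl h
  have hatt : F.loopKernel.att = G.loopKernel.att := by
    ext ⟨a, b⟩
    simp only [AF.loopKernel, Finset.mem_filter, ne_eq, not_and]
    constructor
    · rintro ⟨hab, hcond⟩
      by_cases hne : a = b
      · subst hne
        refine ⟨(hloop a).1 hab, by tauto⟩
      · have hc := hcond hne
        have hla := hloop a
        have hlb := hloop b
        have hc' : (a,a) ∉ F.att ∨ (b,b) ∉ F.att := by tauto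
        exact ⟨step_att F G ha key a b hne hc' hab, by tauto⟩
    · rintro ⟨hab, hcond⟩
      by_cases hne : a = b
      · subst hne
        refine ⟨(hloop a).2 hab, by tauto⟩
      · have hc := hcond hne
        have hla := hloop a
        have hlb := hloop b
        have hc' : (a,a) ∉ G.att ∨ (b,b) ∉ G.att := by tauto
        exact ⟨step_att G F ha.symm key' a b hne hc' hab, by tauto⟩
  have : F.loopKernel = G.loopKernel := AF.ext' ha hatt
  rw [hrat F, hrat G, this]
end

section
/- If two finite AFs F and G with the same arguments agree on all singleton range/anti-range data for non-self-attacking arguments (i.e., for every a with (a,a) ∉ R(F) ∪ R(G), {a}^+_F = {a}^+_G and {a}^-_F = {a}^-_G) and have the same self-attacking arguments, then F^l = G^l, where F^l removes all attacks between distinct self-attacking arguments. -/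
lemma AF_ext' (F G : AF) (h1 : F.args = G.args) (h2 : F.att = G.att) : F = G := by
  cases F; cases G; simp only at h1 h2; subst h1; subst h2; rfl

lemma loopKernel_att_subset (F G : AF)
    (hloop : ∀ a, (a, a) ∈ F.att ↔ (a, a) ∈ G.att)
    (hsing : ∀ a : ℕ, (a, a) ∉ F.att → (a, a) ∉ G.att →
      F.rng {a} = G.rng {a} ∧ F.arng {a} = G.arng {a}) :
    F.loopKernel.att ⊆ G.loopKernel.att := by
  intro p hp
  obtain ⟨a, b⟩ := p
  simp only [AF.loopKernel, Finset.mem_filter] at hp ⊢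
  obtain ⟨hab, hcond⟩ := hp
  by_cases hab' : a = b
  · subst hab'
    exact ⟨(hloop a).1 hab, by simp⟩
  · -- a ≠ b, so ¬(aa ∈ F.att ∧ bb ∈ F.att)
    have h : ¬((a, a) ∈ F.att ∧ (b, b) ∈ F.att) := fun h => hcond ⟨hab', h.1, h.2⟩
    rcases not_and_or.mp h with hna | hnb
    · have hng : (a, a) ∉ G.att := fun h => hna ((hloop a).2 h)
      have hr := (hsing a hna hng).1
      have hbF : b ∈ F.rng {a} := Or.inr ⟨a, rfl, hab⟩
      rw [hr] at hbF
      rcases hbF with hb1 | ⟨s, hs, hsb⟩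
      · exact absurd hb1.symm hab'
      · cases hs
        exact ⟨hsb, fun h => hng h.2.1⟩
    · have hng : (b, b) ∉ G.att := fun h => hnb ((hloop b).2 h)
      have hr := (hsing b hnb hng).2
      have haF : a ∈ F.arng {b} := Or.inr ⟨b, rfl, hab⟩
      rw [hr] at haF
      rcases haF with ha1 | ⟨s, hs, hsa⟩
      · exact absurd ha1 hab'
      · cases hs
        exact ⟨hsa, fun h => hng h.2.2⟩

theorem stmt18 (F G : AF) (ha : F.args = G.args)
    (hloop : ∀ a, (a, a) ∈ F.att ↔ (a, a) ∈ G.att)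
    (hsing : ∀ a : ℕ, (a, a) ∉ F.att → (a, a) ∉ G.att →
      F.rng {a} = G.rng {a} ∧ F.arng {a} = G.arng {a}) :
    F.loopKernel = G.loopKernel := by
  have h1 := loopKernel_att_subset F G hloop hsing
  have h2 := loopKernel_att_subset G F (fun a => (hloop a).symm)
    (fun a hg hf => ⟨(hsing a hf hg).1.symm, (hsing a hf hg).2.symm⟩)
  have hatt : F.loopKernel.att = G.loopKernel.att := Finset.Subset.antisymm h1 h2
  exact AF_ext' _ _ ha hatt
end

section
/- Let σ be a semantics that is +-verifiable and stb-stg-intermediate (stb(F) ⊆ σ(F) ⊆ stg(F) for all F). Then for all finite AFs F and G: F^k(stb) = G^k(stb) if and only if F ≡_E^σ G (for all AFs H, σ(F ∪ H) = σ(G ∪ H)). -/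
namespace StmtAux
open AF

lemma AF_ext {F G : AF} (h1 : F.args = G.args) (h2 : F.att = G.att) : F = G := by
  cases F; cases G; simp_all

/-- complete mutual-attack graph on A, minus edge set E -/
def cg (A : Finset ℕ) (E : Finset (ℕ × ℕ)) : AF :=
  ⟨A, (A ×ˢ A).filter (fun p => p.1 ≠ p.2 ∧ p ∉ E), Finset.filter_subset _ _⟩

lemma mem_cg {A : Finset ℕ} {E : Finset (ℕ × ℕ)} {p : ℕ × ℕ} :
    p ∈ (cg A E).att ↔ p.1 ∈ A ∧ p.2 ∈ A ∧ p.1 ≠ p.2 ∧ p ∉ E := by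
  simp [cg, Finset.mem_filter, Finset.mem_product, and_assoc]

lemma fst_mem_args {F : AF} {x y : ℕ} (h : (x, y) ∈ F.att) : x ∈ F.args :=
  (Finset.mem_product.1 (F.att_sub h)).1

lemma snd_mem_args {F : AF} {x y : ℕ} (h : (x, y) ∈ F.att) : y ∈ F.args :=
  (Finset.mem_product.1 (F.att_sub h)).2

lemma rng_subset_args {F : AF} {S : Set ℕ} (h : S ⊆ ↑F.args) : F.rng S ⊆ ↑F.args := by
  rintro y (hy | ⟨s, _, hs⟩)
  · exact h hy
  · exact snd_mem_args hs

lemma rng_mono {F : AF} {S T : Set ℕ} (h : S ⊆ T) : F.rng S ⊆ F.rng T := by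
  rintro y (hy | ⟨s, hsS, hs⟩)
  · exact Or.inl (h hy)
  · exact Or.inr ⟨s, h hsS, hs⟩

lemma mem_union_att {F G : AF} {p : ℕ × ℕ} :
    p ∈ (F.union G).att ↔ p ∈ F.att ∨ p ∈ G.att := Finset.mem_union

lemma union_args (F G : AF) : (F.union G).args = F.args ∪ G.args := rfl

lemma loop_kernel {F : AF} {x : ℕ} : (x, x) ∈ F.stbKernel.att ↔ (x, x) ∈ F.att := by
  simp [stbKernel, Finset.mem_filter]

lemma loop_eq {F G : AF} (hatt : F.stbKernel.att = G.stbKernel.att) {x : ℕ} :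
    (x, x) ∈ F.att ↔ (x, x) ∈ G.att := by
  rw [← loop_kernel, hatt, loop_kernel]

lemma mem_kernel {F : AF} {x y : ℕ} :
    (x, y) ∈ F.stbKernel.att ↔ (x, y) ∈ F.att ∧ ¬(x ≠ y ∧ (x, x) ∈ F.att) := by
  simp [stbKernel, Finset.mem_filter]

lemma att_agree {F G : AF} (hatt : F.stbKernel.att = G.stbKernel.att) {s y : ℕ}
    (hs : (s, s) ∉ F.att) : ((s, y) ∈ F.att ↔ (s, y) ∈ G.att) := by
  have hsG : (s, s) ∉ G.att := fun h => hs ((loop_eq hatt).2 h)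
  constructor
  · intro h
    have : (s, y) ∈ F.stbKernel.att := mem_kernel.2 ⟨h, fun h2 => hs h2.2⟩
    exact (mem_kernel.1 (hatt ▸ this)).1
  · intro h
    have : (s, y) ∈ G.stbKernel.att := mem_kernel.2 ⟨h, fun h2 => hsG h2.2⟩
    exact (mem_kernel.1 (hatt ▸ this)).1

lemma cf_dir {F G : AF} (hargs : F.args = G.args) (hatt : F.stbKernel.att = G.stbKernel.att)
    (H : AF) {S : Set ℕ} (h : (F.union H).cf S) : (G.union H).cf S := by
  obtain ⟨hsub, hc⟩ := h
  constructor
  · intro x hx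
    have := hsub hx
    simp only [union_args, Finset.coe_union, Set.mem_union, ← hargs] at *
    exact this
  · intro p hp q hq hpq
    rcases mem_union_att.1 hpq with hG | hH
    · have hpp : (p, p) ∉ F.att := fun h => hc p hp p hp (mem_union_att.2 (Or.inl h))
      exact hc p hp q hq (mem_union_att.2 (Or.inl ((att_agree hatt hpp).2 hG)))
    · exact hc p hp q hq (mem_union_att.2 (Or.inr hH))

lemma rng_dir {F G : AF} (hatt : F.stbKernel.att = G.stbKernel.att)
    (H : AF) {S : Set ℕ} (hcf : (F.union H).cf S) :
    (F.union H).rng S = (G.union H).rng S := by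
  ext y
  simp only [rng, Set.mem_union, Set.mem_setOf_eq]
  refine or_congr Iff.rfl (exists_congr fun s => ?_)
  constructor
  · rintro ⟨hsS, hs⟩
    have hss : (s, s) ∉ F.att := fun h => hcf.2 s hsS s hsS (mem_union_att.2 (Or.inl h))
    rcases mem_union_att.1 hs with h | h
    · exact ⟨hsS, mem_union_att.2 (Or.inl ((att_agree hatt hss).1 h))⟩
    · exact ⟨hsS, mem_union_att.2 (Or.inr h)⟩
  · rintro ⟨hsS, hs⟩
    have hss : (s, s) ∉ F.att := fun h => hcf.2 s hsS s hsS (mem_union_att.2 (Or.inl h))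
    rcases mem_union_att.1 hs with h | h
    · exact ⟨hsS, mem_union_att.2 (Or.inl ((att_agree hatt hss).2 h))⟩
    · exact ⟨hsS, mem_union_att.2 (Or.inr h)⟩

lemma fresh (B : Finset ℕ) : B.sup id + 1 ∉ B := fun h => by
  have := Finset.le_sup (f := id) h; simp only [id] at this; omega

lemma caseI (σ : AF → Set (Set ℕ))
    (hint : ∀ (F : AF) (S : Set ℕ), (F.stable S → S ∈ σ F) ∧ (S ∈ σ F → F.stage S))
    {F G : AF} (hσ : ∀ H : AF, σ (F.union H) = σ (G.union H))
    {a : ℕ} (ha : (a, a) ∈ F.att) : (a, a) ∈ G.att := by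
  by_contra hG
  set H := cg (F.args ∪ G.args) ∅ with hH
  have haB : a ∈ F.args ∪ G.args := Finset.mem_union_left _ (fst_mem_args ha)
  have hargs : (G.union H).args = G.args ∪ (F.args ∪ G.args) := rfl
  have hstb : (G.union H).stable {a} := by
    refine ⟨⟨?_, ?_⟩, ?_⟩
    · intro x hx
      rcases hx with rfl
      exact Finset.mem_coe.2 (Finset.mem_union_right _ haB)
    · rintro p rfl q rfl hpq
      rcases mem_union_att.1 hpq with h | h
      · exact hG h
      · exact (mem_cg.1 h).2.2.1 rfl
    · apply Set.Subset.antisymm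
      · exact rng_subset_args (Set.singleton_subset_iff.2 (Finset.mem_coe.2 (Finset.mem_union_right _ haB)))
      · intro y hy
        have hyB : y ∈ F.args ∪ G.args := by
          have := Finset.mem_coe.1 hy
          rw [hargs] at this
          rcases Finset.mem_union.1 this with h | h
          · exact Finset.mem_union_right _ h
          · exact h
        by_cases hya : y = a
        · exact Or.inl hya
        · exact Or.inr ⟨a, rfl, mem_union_att.2 (Or.inr (mem_cg.2
            ⟨haB, hyB, fun e => hya e.symm, by simp⟩))⟩
  have h1 : {a} ∈ σ (F.union H) := (hσ H) ▸ (hint _ _).1 hstb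
  exact ((hint _ _).2 h1).1.2 a rfl a rfl (mem_union_att.2 (Or.inl ha))

lemma caseII (σ : AF → Set (Set ℕ))
    (hint : ∀ (F : AF) (S : Set ℕ), (F.stable S → S ∈ σ F) ∧ (S ∈ σ F → F.stage S))
    {F G : AF} (hσ : ∀ H : AF, σ (F.union H) = σ (G.union H))
    (hl : ∀ x, (x, x) ∈ F.att ↔ (x, x) ∈ G.att)
    {a : ℕ} (haF : a ∈ F.args) (hG : a ∉ G.args) : False := by
  set B := F.args ∪ G.args with hB
  set z := B.sup id + 1 with hzdef
  have hz : z ∉ B := fresh B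
  set A := (insert z B).erase a with hA
  set H := cg A ∅ with hH
  have haB : a ∈ B := Finset.mem_union_left _ haF
  have hza : z ≠ a := fun h => hz (h ▸ haB)
  have hzA : z ∈ A := Finset.mem_erase.2 ⟨hza, Finset.mem_insert_self _ _⟩
  have hGsub : G.args ⊆ A := fun x hx => Finset.mem_erase.2
    ⟨fun e => hG (e ▸ hx), Finset.mem_insert_of_mem (Finset.mem_union_right _ hx)⟩
  have hzG : z ∉ G.args := fun h => hz (Finset.mem_union_right _ h)
  have hzF : z ∉ F.args := fun h => hz (Finset.mem_union_left _ h)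
  have haA : a ∉ A := Finset.notMem_erase a _
  have hstb : (G.union H).stable {z} := by
    refine ⟨⟨?_, ?_⟩, ?_⟩
    · intro x hx
      rcases hx with rfl
      exact Finset.mem_coe.2 (Finset.mem_union_right _ hzA)
    · rintro p rfl q rfl hpq
      rcases mem_union_att.1 hpq with h | h
      · exact hzG (fst_mem_args h)
      · exact (mem_cg.1 h).2.2.1 rfl
    · apply Set.Subset.antisymm
      · exact rng_subset_args (Set.singleton_subset_iff.2 (Finset.mem_coe.2 (Finset.mem_union_right _ hzA)))
      · intro y hy
        have hyA : y ∈ A := by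
          rcases Finset.mem_union.1 (Finset.mem_coe.1 hy) with h | h
          · exact hGsub h
          · exact h
        by_cases hyz : y = z
        · exact Or.inl hyz
        · exact Or.inr ⟨z, rfl, mem_union_att.2 (Or.inr (mem_cg.2
            ⟨hzA, hyA, fun e => hyz e.symm, by simp⟩))⟩
  have h1 : {z} ∈ σ (F.union H) := (hσ H) ▸ (hint _ _).1 hstb
  have hstg := (hint _ _).2 h1
  have hTcf : (F.union H).cf {z, a} := by
    constructor
    · intro x hx
      rcases hx with rfl | rfl
      · exact Finset.mem_coe.2 (Finset.mem_union_right _ hzA)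
      · exact Finset.mem_coe.2 (Finset.mem_union_left _ haF)
    · intro p hp q hq hpq
      rcases mem_union_att.1 hpq with h | h
      · rcases hp with rfl | rfl
        · exact hzF (fst_mem_args h)
        · rcases hq with rfl | rfl
          · exact hzF (snd_mem_args h)
          · exact hG (fst_mem_args ((hl _).1 h))
      · have h1 := (mem_cg.1 h).1
        have h2 := (mem_cg.1 h).2.1
        have h3 := (mem_cg.1 h).2.2.1
        rcases hp with rfl | rfl
        · rcases hq with rfl | rfl
          · exact h3 rfl
          · exact haA h2
        · exact haA h1
  have heq := hstg.2 {z, a} hTcf (rng_mono (Set.singleton_subset_iff.2 (Or.inl rfl)))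
  have haT : a ∈ (F.union H).rng {z, a} := Or.inl (Or.inr rfl)
  rw [← heq] at haT
  rcases haT with h | ⟨s, hs, hatt⟩
  · exact hza (Set.mem_singleton_iff.1 h).symm
  · rcases hs with rfl
    rcases mem_union_att.1 hatt with h | h
    · exact hzF (fst_mem_args h)
    · exact haA (mem_cg.1 h).2.1

lemma caseIII (σ : AF → Set (Set ℕ))
    (hint : ∀ (F : AF) (S : Set ℕ), (F.stable S → S ∈ σ F) ∧ (S ∈ σ F → F.stage S))
    {F G : AF} (hσ : ∀ H : AF, σ (F.union H) = σ (G.union H))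
    (hl : ∀ x, (x, x) ∈ F.att ↔ (x, x) ∈ G.att)
    {p : ℕ × ℕ} (hp : p ∈ F.stbKernel.att) : p ∈ G.stbKernel.att := by
  obtain ⟨a, b⟩ := p
  rcases eq_or_ne a b with rfl | hab
  · exact loop_kernel.2 ((hl a).1 (loop_kernel.1 hp))
  obtain ⟨habF, hcond⟩ := mem_kernel.1 hp
  have haaF : (a, a) ∉ F.att := fun h => hcond ⟨hab, h⟩
  have haaG : (a, a) ∉ G.att := fun h => haaF ((hl a).2 h)
  by_contra hK
  have habG : (a, b) ∉ G.att := fun h => hK (mem_kernel.2 ⟨h, fun h2 => haaG h2.2⟩)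
  set B := F.args ∪ G.args with hB
  set z := B.sup id + 1 with hzdef
  have hz : z ∉ B := fresh B
  have haB : a ∈ B := Finset.mem_union_left _ (fst_mem_args habF)
  have hbB : b ∈ B := Finset.mem_union_left _ (snd_mem_args habF)
  set A := insert z B with hA
  set H := cg A {(a, b)} with hH
  have hza : z ≠ a := fun h => hz (h ▸ haB)
  have haA : a ∈ A := Finset.mem_insert_of_mem haB
  have hbA : b ∈ A := Finset.mem_insert_of_mem hbB
  have hzA : z ∈ A := Finset.mem_insert_self _ _
  have hzG : z ∉ G.args := fun h => hz (Finset.mem_union_right _ h)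
  have hstb : (F.union H).stable {a} := by
    refine ⟨⟨?_, ?_⟩, ?_⟩
    · intro x hx
      rcases hx with rfl
      exact Finset.mem_coe.2 (Finset.mem_union_left _ (fst_mem_args habF))
    · rintro x rfl y rfl hxy
      rcases mem_union_att.1 hxy with h | h
      · exact haaF h
      · exact (mem_cg.1 h).2.2.1 rfl
    · apply Set.Subset.antisymm
      · exact rng_subset_args (Set.singleton_subset_iff.2 (Finset.mem_coe.2 (Finset.mem_union_left _ (fst_mem_args habF))))
      · intro y hy
        have hyA : y ∈ A := by
          rcases Finset.mem_union.1 (Finset.mem_coe.1 hy) with h | h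
          · exact Finset.mem_insert_of_mem (Finset.mem_union_left _ h)
          · exact h
        by_cases hya : y = a
        · exact Or.inl hya
        by_cases hyb : y = b
        · exact Or.inr ⟨a, rfl, mem_union_att.2 (Or.inl (hyb ▸ habF))⟩
        · exact Or.inr ⟨a, rfl, mem_union_att.2 (Or.inr (mem_cg.2
            ⟨haA, hyA, fun e => hya e.symm, by simp [Prod.ext_iff, hyb]⟩))⟩
  have h1 : {a} ∈ σ (G.union H) := (hσ H) ▸ (hint _ _).1 hstb
  have hstg := (hint _ _).2 h1
  have hTcf : (G.union H).cf {z} := by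
    constructor
    · intro x hx
      rcases hx with rfl
      exact Finset.mem_coe.2 (Finset.mem_union_right _ hzA)
    · rintro x rfl y rfl hxy
      rcases mem_union_att.1 hxy with h | h
      · exact hzG (fst_mem_args h)
      · exact (mem_cg.1 h).2.2.1 rfl
  have hargsub : ((G.union H).args : Set ℕ) ⊆ (G.union H).rng {z} := by
    intro y hy
    have hyA : y ∈ A := by
      rcases Finset.mem_union.1 (Finset.mem_coe.1 hy) with h | h
      · exact Finset.mem_insert_of_mem (Finset.mem_union_right _ h)
      · exact h
    by_cases hyz : y = z
    · exact Or.inl hyz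
    · exact Or.inr ⟨z, rfl, mem_union_att.2 (Or.inr (mem_cg.2
        ⟨hzA, hyA, fun e => hyz e.symm, by simp [Prod.ext_iff, hza]⟩))⟩
  have hsub : (G.union H).rng {a} ⊆ (G.union H).rng {z} :=
    (rng_subset_args (Set.singleton_subset_iff.2 (Finset.mem_coe.2 (Finset.mem_union_right _ haA)))).trans hargsub
  have heq := hstg.2 {z} hTcf hsub
  have hb : b ∈ (G.union H).rng {z} :=
    hargsub (Finset.mem_coe.2 (Finset.mem_union_right _ hbA))
  rw [← heq] at hb
  rcases hb with h | ⟨s, hs, hatt⟩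
  · exact hab (Set.mem_singleton_iff.1 h).symm
  · rcases hs with rfl
    rcases mem_union_att.1 hatt with h | h
    · exact habG h
    · exact absurd (mem_cg.1 h).2.2.2 (by simp)

end StmtAux


theorem stmt19 (σ : AF → Set (Set ℕ))
    (hver : ∃ γ : Set (Set ℕ × Set ℕ) → Set ℕ → Set (Set ℕ),
      ∀ F : AF, γ {p | ∃ S, F.cf S ∧ p = (S, F.rng S)} ↑F.args = σ F)
    (hint : ∀ (F : AF) (S : Set ℕ), (F.stable S → S ∈ σ F) ∧ (S ∈ σ F → F.stage S))
    (F G : AF) :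
    F.stbKernel = G.stbKernel ↔ ∀ H : AF, σ (F.union H) = σ (G.union H) := by
  constructor
  · intro hk H
    obtain ⟨γ, hγ⟩ := hver
    have hargs : F.args = G.args := by
      have h := congrArg AF.args hk
      exact h
    have hatt : F.stbKernel.att = G.stbKernel.att := congrArg AF.att hk
    rw [← hγ (F.union H), ← hγ (G.union H)]
    have hP : {p : Set ℕ × Set ℕ | ∃ S, (F.union H).cf S ∧ p = (S, (F.union H).rng S)}
        = {p | ∃ S, (G.union H).cf S ∧ p = (S, (G.union H).rng S)} := by
      ext p
      simp only [Set.mem_setOf_eq]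
      constructor
      · rintro ⟨S, hc, rfl⟩
        exact ⟨S, StmtAux.cf_dir hargs hatt H hc, by rw [StmtAux.rng_dir hatt H hc]⟩
      · rintro ⟨S, hc, rfl⟩
        exact ⟨S, StmtAux.cf_dir hargs.symm hatt.symm H hc,
          by rw [StmtAux.rng_dir hatt.symm H hc]⟩
    have hargsU : ((F.union H).args : Set ℕ) = ((G.union H).args : Set ℕ) := by
      simp [AF.union, hargs]
    rw [hP, hargsU]
  · intro hσ
    have hσ' : ∀ H, σ (G.union H) = σ (F.union H) := fun H => (hσ H).symm
    have hl : ∀ x, (x, x) ∈ F.att ↔ (x, x) ∈ G.att :=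
      fun x => ⟨StmtAux.caseI σ hint hσ, StmtAux.caseI σ hint hσ'⟩
    have hl' : ∀ x, (x, x) ∈ G.att ↔ (x, x) ∈ F.att := fun x => (hl x).symm
    have ha : F.args = G.args := by
      ext x
      constructor
      · intro h; by_contra hG; exact StmtAux.caseII σ hint hσ hl h hG
      · intro h; by_contra hG; exact StmtAux.caseII σ hint hσ' hl' h hG
    have hK : F.stbKernel.att = G.stbKernel.att := by
      ext p
      exact ⟨StmtAux.caseIII σ hint hσ hl, StmtAux.caseIII σ hint hσ' hl'⟩
    exact StmtAux.AF_ext ha hK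
end
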